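/- Assume the invariant setting with S_A ≠ ∅ and L_B \ S_B ≠ ∅, and write p_A = max S_A and q_B = min(L_B \ S_B). Assume a_A < p_A, q_B < a_B, and q_B is less than every element of L_A \ S_A (case 3 of the case analysis). Then: S'_A = S_A \ {a_A}; S'_B = S_B; q_B is the B-side peek, i.e. q_B = min((L_B ∪ {a_B}) \ S'_B), and q_B is less than every element of (L_A \ {a_A}) \ S'_A; and H_h(L') = (H_h(L_A ∪ L_B) \ {a_A}) ∪ {q_B} = S'_A ∪ S_B ∪ {q_B}. -/

import Mathlib

/-
`H_h(L_A ∪ L_B) = S_A ∪ S_B` says that `S_A ∪ S_B` is an initial segment of `L_A ∪ L_B`, and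
an initial segment is determined by its cardinality, so every claimed identity `H_m(L) = S`
amounts to checking that `S` is an initial segment of `L` of size `m`. In case 3, `q_B` is the
least element of `L_A ∪ L_B` outside the head; since `a_A` lies in the head and `a_B` lies
beyond `q_B`, trading `a_A` for `a_B` moves the cut of the head exactly up to `q_B`.
-/

/-- `smallSet m L` is `H_m(L)`: the set of the `m` smallest elements of the finset `L`
(the first `m` entries of the increasing enumeration of `L`). -/
def smallSet {α : Type*} [LinearOrder α] (m : ℕ) (L : Finset α) : Finset α :=
  ((L.sort (· ≤ ·)).take m).toFinset

open Finset

section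

variable {α : Type*} [LinearOrder α]

def IsInitialSegment (S L : Finset α) : Prop :=
  S ⊆ L ∧ ∀ x ∈ S, ∀ y ∈ L \ S, x < y

namespace IsInitialSegment

variable {S T L : Finset α}

theorem of_cut (hS : S ⊆ L) (c : α) (hle : ∀ x ∈ S, x ≤ c) (hlt : ∀ y ∈ L \ S, c < y) :
    IsInitialSegment S L :=
  ⟨hS, fun x hx y hy => (hle x hx).trans_lt (hlt y hy)⟩

theorem mem_of_lt (hS : IsInitialSegment S L) {x y : α} (hx : x ∈ S) (hy : y ∈ L)
    (hyx : y < x) : y ∈ S := by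
  by_contra hyS
  exact (hS.2 x hx y (mem_sdiff.mpr ⟨hy, hyS⟩)).not_gt hyx

theorem inter_of_subset (hS : IsInitialSegment S L) {M : Finset α} (hM : M ⊆ L) :
    IsInitialSegment (S ∩ M) M := by
  refine ⟨inter_subset_right, fun x hx y hy => hS.2 x (mem_inter.mp hx).1 y ?_⟩
  simp only [mem_sdiff, mem_inter, not_and] at hy ⊢
  exact ⟨hM hy.1, fun hyS => hy.2 hyS hy.1⟩

theorem erase (hS : IsInitialSegment S L) (a : α) :
    IsInitialSegment (S.erase a) (L.erase a) := by
  have := hS.inter_of_subset (erase_subset a L)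
  rwa [inter_erase, inter_eq_left.mpr hS.1] at this

theorem insert_of_forall_lt (hS : IsInitialSegment S L) {b : α} (hb : ∀ x ∈ S, x < b) :
    IsInitialSegment S (insert b L) := by
  refine ⟨hS.1.trans (subset_insert b L), fun x hx y hy => ?_⟩
  obtain ⟨rfl | hyL, hyS⟩ := mem_sdiff.mp hy |>.imp_left mem_insert.mp
  · exact hb x hx
  · exact hS.2 x hx y (mem_sdiff.mpr ⟨hyL, hyS⟩)

theorem subset_of_card_le (hS : IsInitialSegment S L) (hT : IsInitialSegment T L)
    (hcard : S.card ≤ T.card) : S ⊆ T := by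
  intro x hxS
  by_contra hxT
  have hTS : T ⊆ S := fun t htT => hS.mem_of_lt hxS (hT.1 htT)
    (hT.2 t htT x (mem_sdiff.mpr ⟨hS.1 hxS, hxT⟩))
  exact (card_lt_card (ssubset_of_subset_not_subset hTS fun h => hxT (h hxS))).not_ge hcard

theorem eq_of_card_eq (hS : IsInitialSegment S L) (hT : IsInitialSegment T L)
    (hcard : S.card = T.card) : S = T :=
  (hS.subset_of_card_le hT hcard.le).antisymm (hT.subset_of_card_le hS hcard.ge)

end IsInitialSegment

theorem smallSet_subset (m : ℕ) (L : Finset α) : smallSet m L ⊆ L := fun x hx => by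
  simp only [smallSet, List.mem_toFinset] at hx
  exact (mem_sort _).mp (List.mem_of_mem_take hx)

theorem card_smallSet {m : ℕ} {L : Finset α} (hm : m ≤ L.card) : (smallSet m L).card = m := by
  have hnd : ((L.sort (· ≤ ·)).take m).Nodup := (List.take_sublist m _).nodup (L.sort_nodup _)
  rw [smallSet, List.toFinset_card_of_nodup hnd, List.length_take, length_sort,
    min_eq_left hm]

theorem isInitialSegment_smallSet (m : ℕ) (L : Finset α) :
    IsInitialSegment (smallSet m L) L := by
  refine ⟨smallSet_subset m L, fun x hx y hy => ?_⟩
  have hp := L.sortedLT_sort.pairwise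
  rw [← List.take_append_drop m (L.sort (· ≤ ·)), List.pairwise_append] at hp
  rw [mem_sdiff, ← mem_sort (· ≤ ·),
    ← List.take_append_drop m (L.sort (· ≤ ·)), List.mem_append] at hy
  simp only [smallSet, List.mem_toFinset] at hx hy
  exact hp.2.2 x hx y (hy.1.resolve_left hy.2)

theorem IsInitialSegment.smallSet_eq {S L : Finset α} {m : ℕ} (hS : IsInitialSegment S L)
    (hm : S.card = m) : smallSet m L = S := by
  subst hm
  exact (isInitialSegment_smallSet _ L).eq_of_card_eq hS (card_smallSet (card_le_card hS.1))

theorem IsInitialSegment.of_union {SA SB LA LB : Finset α}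
    (hU : IsInitialSegment (SA ∪ SB) (LA ∪ LB)) (hdisj : Disjoint LA LB)
    (hSA : SA ⊆ LA) (hSB : SB ⊆ LB) : IsInitialSegment SA LA := by
  have hSBA : SB ∩ LA = ∅ := disjoint_iff_inter_eq_empty.mp (hdisj.symm.mono_left hSB)
  have := hU.inter_of_subset (M := LA) subset_union_left
  rwa [union_inter_distrib_right, hSBA, union_empty,
    inter_eq_left.mpr hSA] at this

theorem IsInitialSegment.smallSet_insert_erase {S L : Finset α} {a b q : α}
    (hS : IsInitialSegment S L) (ha : a ∈ S) (hq : IsLeast ↑(L \ S) q) (hqb : q < b) :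
    smallSet S.card (insert b (L.erase a)) = insert q (S.erase a) := by
  obtain ⟨hqL, hqS⟩ := mem_sdiff.mp hq.1
  have hlt : ∀ x ∈ S, x < q := fun x hx => hS.2 x hx q hq.1
  refine IsInitialSegment.smallSet_eq (.of_cut ?_ q ?_ ?_) ?_
  · refine insert_subset_iff.mpr ⟨?_, (erase_subset_erase a hS.1).trans ?_⟩
    · exact mem_insert_of_mem (mem_erase.mpr ⟨(hlt a ha).ne', hqL⟩)
    · exact subset_insert b _
  · intro x hx
    rcases mem_insert.mp hx with rfl | hx
    exacts [le_rfl, (hlt x (mem_of_mem_erase hx)).le]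
  · intro y hy
    simp only [mem_sdiff, mem_insert, mem_erase, not_or, not_and] at hy
    obtain ⟨rfl | ⟨hya, hyL⟩, hyq, hyS⟩ := hy
    · exact hqb
    · exact (hq.2 (mem_sdiff.mpr ⟨hyL, hyS hya⟩)).lt_of_ne' hyq
  · rw [card_insert_of_notMem (fun h => hqS (mem_of_mem_erase h)),
      card_erase_add_one ha]

theorem isLeast_union_sdiff_union {LA LB SA SB : Finset α} {q : α}
    (hq : IsLeast ↑(LB \ SB) q) (hqSA : q ∉ SA) (hA : ∀ x ∈ LA \ SA, q ≤ x) :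
    IsLeast ↑((LA ∪ LB) \ (SA ∪ SB)) q := by
  obtain ⟨hqB, hqSB⟩ := mem_sdiff.mp hq.1
  refine ⟨mem_sdiff.mpr ⟨mem_union_right _ hqB, ?_⟩, fun y hy => ?_⟩
  · rw [mem_union, not_or]
    exact ⟨hqSA, hqSB⟩
  · simp only [coe_sdiff, Set.mem_sdiff, mem_coe, mem_union, not_or] at hy
    obtain ⟨hyA | hyB, hySA, hySB⟩ := hy
    exacts [hA y (mem_sdiff.mpr ⟨hyA, hySA⟩), hq.2 (mem_sdiff.mpr ⟨hyB, hySB⟩)]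

end

/-- case 3 of the case analysis.  Invariant setting: `L_A, L_B` disjoint
with `|L_A| + |L_B| = 2h+1`, `S_A ⊆ L_A`, `S_B ⊆ L_B`, `S_A ∪ S_B = H_h(L_A ∪ L_B)`,
`a_A ∈ L_A`, `a_B ∉ L_A ∪ L_B`; `L' = (L_A \ {a_A}) ∪ L_B ∪ {a_B}`; updated small sets
`S'_A = H_{|S_A|-1}(L_A \ {a_A})` and `S'_B = H_{|S_B|}(L_B ∪ {a_B})`.
Assume `S_A ≠ ∅`, `L_B \ S_B ≠ ∅`, `a_A < p_A = max S_A`, `q_B = min(L_B \ S_B) < a_B`,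
and `q_B` is less than every element of `L_A \ S_A`.  Then `S'_A = S_A \ {a_A}`,
`S'_B = S_B`, `q_B` is the B-side peek (`q_B = min((L_B ∪ {a_B}) \ S'_B)`) and is less
than every element of `(L_A \ {a_A}) \ S'_A`, and
`H_h(L') = (H_h(L_A ∪ L_B) \ {a_A}) ∪ {q_B} = S'_A ∪ S_B ∪ {q_B}`. -/
theorem invariant_case3 {α : Type*} [LinearOrder α] (h : ℕ)
    (LA LB SA SB : Finset α) (hdisj : Disjoint LA LB)
    (hcard : LA.card + LB.card = 2 * h + 1)
    (hSA : SA ⊆ LA) (hSB : SB ⊆ LB)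
    (hinv : SA ∪ SB = smallSet h (LA ∪ LB))
    (aA aB : α) (haA : aA ∈ LA) (haB : aB ∉ LA ∪ LB)
    (hSAne : SA.Nonempty) (hQBne : (LB \ SB).Nonempty)
    (h1 : aA < SA.max' hSAne)
    (h2 : (LB \ SB).min' hQBne < aB)
    (h3 : ∀ x ∈ LA \ SA, (LB \ SB).min' hQBne < x) :
    smallSet (SA.card - 1) (LA \ {aA}) = SA \ {aA} ∧
    smallSet SB.card (LB ∪ {aB}) = SB ∧
    ((LB ∪ {aB}) \ smallSet SB.card (LB ∪ {aB})).min = ((LB \ SB).min' hQBne : WithTop α) ∧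
    (∀ x ∈ (LA \ {aA}) \ smallSet (SA.card - 1) (LA \ {aA}), (LB \ SB).min' hQBne < x) ∧
    smallSet h ((LA \ {aA}) ∪ LB ∪ {aB}) =
      (smallSet h (LA ∪ LB) \ {aA}) ∪ {(LB \ SB).min' hQBne} ∧
    smallSet h ((LA \ {aA}) ∪ LB ∪ {aB}) =
      smallSet (SA.card - 1) (LA \ {aA}) ∪ SB ∪ {(LB \ SB).min' hQBne} := by
  set q := (LB \ SB).min' hQBne
  have hU : IsInitialSegment (SA ∪ SB) (LA ∪ LB) := hinv ▸ isInitialSegment_smallSet h _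
  have hSAseg := hU.of_union hdisj hSA hSB
  have hSBseg := (union_comm SA SB ▸ union_comm LA LB ▸ hU).of_union hdisj.symm hSB hSA
  have haSA : aA ∈ SA := hSAseg.mem_of_lt (SA.max'_mem hSAne) haA h1
  have haLB : aA ∉ LB := disjoint_left.mp hdisj haA
  have haBSB : aB ∉ SB := fun ha => haB (mem_union_right _ (hSB ha))
  have hq : IsLeast ↑((LA ∪ LB) \ (SA ∪ SB)) q :=
    isLeast_union_sdiff_union (isLeast_min' _ hQBne)
      (disjoint_right.mp (hdisj.mono_left hSA) (mem_sdiff.mp (min'_mem _ _)).1)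
      fun x hx => (h3 x hx).le
  have hcardU : (SA ∪ SB).card = h := by
    rw [hinv, card_smallSet (by rw [card_union_of_disjoint hdisj]; omega)]
  have hSA' : smallSet (SA.card - 1) (LA \ {aA}) = SA \ {aA} := by
    simp only [sdiff_singleton_eq_erase]
    exact (hSAseg.erase aA).smallSet_eq (card_erase_of_mem haSA)
  have hSB' : smallSet SB.card (LB ∪ {aB}) = SB := by
    rw [union_singleton]
    exact (hSBseg.insert_of_forall_lt fun x hx =>
      (hU.2 x (mem_union_right _ hx) q hq.1).trans h2).smallSet_eq rfl
  have hL' : (LA \ {aA}) ∪ LB ∪ {aB} = insert aB ((LA ∪ LB).erase aA) := by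
    rw [union_singleton, erase_union_distrib, erase_eq_of_notMem haLB,
      sdiff_singleton_eq_erase]
  have hhead' : smallSet h ((LA \ {aA}) ∪ LB ∪ {aB}) = insert q ((SA ∪ SB).erase aA) := by
    rw [hL', ← hcardU, hU.smallSet_insert_erase (mem_union_left _ haSA) hq h2]
  refine ⟨hSA', hSB', ?_, ?_, ?_, ?_⟩
  · rw [hSB', union_singleton, insert_sdiff_of_notMem _ haBSB, min_insert,
      ← coe_min' hQBne, min_eq_right (WithTop.coe_le_coe.mpr h2.le)]
  · rwa [hSA', sdiff_sdiff_sdiff_cancel_right (singleton_subset_iff.mpr haSA)]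
  · rw [hhead', ← hinv, union_singleton, sdiff_singleton_eq_erase]
  · rw [hhead', hSA', union_singleton, erase_union_distrib, sdiff_singleton_eq_erase,
      erase_eq_of_notMem (fun ha => haLB (hSB ha))]
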